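/- arXiv:2508.21079 — 3 statements merged into one kernel-verified Lean document; each statement's English description precedes it below -/
import Mathlib

section
/- Let 0 < a < b be real numbers and let X and Y be independent random variables, each uniformly distributed on the interval [a, b]. Then the ratio Z = Y/X has a probability density function f_Z with respect to Lebesgue measure on ℝ given by f_Z(z) = (b² − a²/z²) / (2(b − a)²) for a/b ≤ z < 1, f_Z(z) = (b²/z² − a²) / (2(b − a)²) for 1 ≤ z ≤ b/a, and f_Z(z) = 0 otherwise. -/
open MeasureTheory ProbabilityTheory

/-- The density of the ratio `Z = Y/X` of two independent random variables
uniformly distributed on `[a, b]`, `0 < a < b`. -/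
noncomputable def ratioDensity (a b : ℝ) : ℝ → ℝ := fun z =>
  if a / b ≤ z ∧ z < 1 then (b ^ 2 - a ^ 2 / z ^ 2) / (2 * (b - a) ^ 2)
  else if 1 ≤ z ∧ z ≤ b / a then (b ^ 2 / z ^ 2 - a ^ 2) / (2 * (b - a) ^ 2)
  else 0

/-- The CDF of the ratio distribution. -/
noncomputable def ratioCDF (a b : ℝ) : ℝ → ℝ := fun t =>
  if t < a / b then 0
  else if t < 1 then (b ^ 2 * t + a ^ 2 / t - 2 * a * b) / (2 * (b - a) ^ 2)
  else if t ≤ b / a then 1 - (b ^ 2 / t + a ^ 2 * t - 2 * a * b) / (2 * (b - a) ^ 2)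
  else 1

/-- FTC-based computation of a lower Lebesgue integral over `Ioc s t`. -/
lemma lint_Ioc_eq (f g G : ℝ → ℝ) (s t : ℝ) (hst : s ≤ t)
    (hfg : ∀ z ∈ Set.Ioo s t, f z = g z)
    (hgc : ContinuousOn g (Set.Icc s t))
    (hG : ∀ z ∈ Set.Icc s t, HasDerivAt G (g z) z)
    (hpos : ∀ z ∈ Set.Ioo s t, 0 ≤ g z) :
    (∫⁻ z in Set.Ioc s t, ENNReal.ofReal (f z)) = ENNReal.ofReal (G t - G s)
      ∧ 0 ≤ G t - G s := by
  have hint : IntegrableOn g (Set.Ioo s t) :=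
    (hgc.integrableOn_Icc).mono_set Set.Ioo_subset_Icc_self
  have hae : 0 ≤ᵐ[volume.restrict (Set.Ioo s t)] g := by
    filter_upwards [ae_restrict_mem measurableSet_Ioo] with z hz using hpos z hz
  have hval : ∫ z in Set.Ioo s t, g z = G t - G s := by
    rw [← MeasureTheory.integral_Ioc_eq_integral_Ioo, ← intervalIntegral.integral_of_le hst]
    exact intervalIntegral.integral_eq_sub_of_hasDerivAt
      (fun z hz => hG z (by rwa [Set.uIcc_of_le hst] at hz))
      ((hgc.mono (by rw [Set.uIcc_of_le hst])).intervalIntegrable)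
  constructor
  · rw [← Measure.restrict_congr_set MeasureTheory.Ioo_ae_eq_Ioc,
      setLIntegral_congr_fun measurableSet_Ioo
        (fun z hz => by rw [hfg z hz]),
      ← ofReal_integral_eq_lintegral_ofReal hint hae, hval]
  · rw [← hval]
    exact MeasureTheory.integral_nonneg_of_ae hae

/-- The integral of the density over `Iic t` equals the CDF. -/
lemma lintegral_ratioDensity_Iic (a b : ℝ) (ha : 0 < a) (hab : a < b) (t : ℝ) :
    (∫⁻ z in Set.Iic t, ENNReal.ofReal (ratioDensity a b z))
      = ENNReal.ofReal (ratioCDF a b t) := by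
  have hb : 0 < b := ha.trans hab
  have hba : 0 < b - a := sub_pos.2 hab
  have h0ab : 0 < a / b := div_pos ha hb
  have hab1 : a / b < 1 := (div_lt_one hb).2 hab
  have hba1 : 1 < b / a := (one_lt_div ha).2 hab
  have hlow : ∀ z : ℝ, z < a / b → ratioDensity a b z = 0 := by
    intro z hz
    simp only [ratioDensity]
    rw [if_neg (fun h => absurd h.1 (not_le.2 hz)),
      if_neg (fun h => absurd h.1 (not_le.2 (hz.trans hab1)))]
  have hhigh : ∀ z : ℝ, b / a < z → ratioDensity a b z = 0 := by
    intro z hz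
    simp only [ratioDensity]
    rw [if_neg (fun h => absurd h.2 (not_lt.2 (hba1.le.trans hz.le))),
      if_neg (fun h => absurd h.2 (not_le.2 hz))]
  have P0 : (∫⁻ z in Set.Iic (a / b), ENNReal.ofReal (ratioDensity a b z)) = 0 := by
    rw [← Measure.restrict_congr_set MeasureTheory.Iio_ae_eq_Iic,
      setLIntegral_congr_fun (g := fun _ => 0) measurableSet_Iio
        (fun z hz => by
          rw [hlow z hz, ENNReal.ofReal_zero]), lintegral_zero]
  have P1 : ∀ u, a / b ≤ u → u ≤ 1 →
      (∫⁻ z in Set.Ioc (a / b) u, ENNReal.ofReal (ratioDensity a b z))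
        = ENNReal.ofReal ((b ^ 2 * u + a ^ 2 / u) / (2 * (b - a) ^ 2)
            - (b ^ 2 * (a / b) + a ^ 2 / (a / b)) / (2 * (b - a) ^ 2))
      ∧ 0 ≤ (b ^ 2 * u + a ^ 2 / u) / (2 * (b - a) ^ 2)
            - (b ^ 2 * (a / b) + a ^ 2 / (a / b)) / (2 * (b - a) ^ 2) := by
    intro u hu1 hu2
    refine lint_Ioc_eq _ (fun z => (b ^ 2 - a ^ 2 / z ^ 2) / (2 * (b - a) ^ 2))
      (fun z => (b ^ 2 * z + a ^ 2 / z) / (2 * (b - a) ^ 2)) _ _ hu1 ?_ ?_ ?_ ?_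
    · intro z hz
      simp only [ratioDensity]
      rw [if_pos ⟨hz.1.le, lt_of_lt_of_le hz.2 hu2⟩]
    · apply ContinuousOn.div _ continuousOn_const (fun z _ => by positivity)
      apply continuousOn_const.sub
      apply continuousOn_const.div ((continuous_pow 2).continuousOn)
      intro z hz
      have hz0 : 0 < z := h0ab.trans_le hz.1
      positivity
    · intro z hz
      have hz0 : 0 < z := h0ab.trans_le hz.1
      have h1 : HasDerivAt (fun z : ℝ => b ^ 2 * z + a ^ 2 / z)
          (b ^ 2 * 1 + a ^ 2 * (-(z ^ 2)⁻¹)) z := by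
        have key : (fun z : ℝ => b ^ 2 * z + a ^ 2 / z)
            = fun y => b ^ 2 * id y + a ^ 2 * y⁻¹ := by
          funext y; simp [div_eq_mul_inv]
        rw [key]
        exact (((hasDerivAt_id z).const_mul (b ^ 2)).add
            ((hasDerivAt_inv hz0.ne').const_mul (a ^ 2)))
      have := h1.div_const (2 * (b - a) ^ 2)
      refine this.congr_deriv ?_
      ring
    · intro z hz
      have hz0 : 0 < z := h0ab.trans_le hz.1.le
      apply div_nonneg _ (by positivity)
      rw [sub_nonneg, div_le_iff₀ (by positivity)]
      have h1 : a ≤ z * b := (div_le_iff₀ hb).1 hz.1.le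
      nlinarith
  have P2 : ∀ u, 1 ≤ u → u ≤ b / a →
      (∫⁻ z in Set.Ioc 1 u, ENNReal.ofReal (ratioDensity a b z))
        = ENNReal.ofReal ((-((b ^ 2 / u + a ^ 2 * u) / (2 * (b - a) ^ 2)))
            - (-((b ^ 2 / 1 + a ^ 2 * 1) / (2 * (b - a) ^ 2))))
      ∧ 0 ≤ (-((b ^ 2 / u + a ^ 2 * u) / (2 * (b - a) ^ 2)))
            - (-((b ^ 2 / 1 + a ^ 2 * 1) / (2 * (b - a) ^ 2))) := by
    intro u hu1 hu2
    refine lint_Ioc_eq _ (fun z => (b ^ 2 / z ^ 2 - a ^ 2) / (2 * (b - a) ^ 2))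
      (fun z => -((b ^ 2 / z + a ^ 2 * z) / (2 * (b - a) ^ 2))) _ _ hu1 ?_ ?_ ?_ ?_
    · intro z hz
      simp only [ratioDensity]
      rw [if_neg (fun h => absurd h.2 (not_lt.2 hz.1.le)),
        if_pos ⟨hz.1.le, hz.2.le.trans hu2⟩]
    · apply ContinuousOn.div _ continuousOn_const (fun z _ => by positivity)
      apply ContinuousOn.sub _ continuousOn_const
      apply continuousOn_const.div ((continuous_pow 2).continuousOn)
      intro z hz
      have hz0 : (0:ℝ) < z := lt_of_lt_of_le one_pos hz.1
      positivity
    · intro z hz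
      have hz0 : 0 < z := lt_of_lt_of_le one_pos hz.1
      have h1 : HasDerivAt (fun z : ℝ => b ^ 2 / z + a ^ 2 * z)
          (b ^ 2 * (-(z ^ 2)⁻¹) + a ^ 2 * 1) z := by
        have key : (fun z : ℝ => b ^ 2 / z + a ^ 2 * z)
            = fun y => b ^ 2 * y⁻¹ + a ^ 2 * id y := by
          funext y; simp [div_eq_mul_inv]
        rw [key]
        exact (((hasDerivAt_inv hz0.ne').const_mul (b ^ 2)).add
            ((hasDerivAt_id z).const_mul (a ^ 2)))
      have := (h1.div_const (2 * (b - a) ^ 2)).neg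
      refine this.congr_deriv ?_
      ring
    · intro z hz
      have hz0 : (0:ℝ) < z := lt_of_lt_of_le one_pos hz.1.le
      apply div_nonneg _ (by positivity)
      rw [sub_nonneg, le_div_iff₀ (by positivity)]
      have h1 : z * a ≤ b := by
        have := hz.2.le.trans hu2
        rw [le_div_iff₀ ha] at this
        exact this
      nlinarith [mul_le_mul h1 h1 (mul_nonneg hz0.le ha.le) hb.le]
  rcases lt_or_ge t (a / b) with h1 | h1
  · rw [setLIntegral_congr_fun (g := fun _ => 0) measurableSet_Iic
        (fun z hz => by
          rw [hlow z (lt_of_le_of_lt hz h1), ENNReal.ofReal_zero]), lintegral_zero,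
      ratioCDF, if_pos h1, ENNReal.ofReal_zero]
  rcases lt_or_ge t 1 with h2 | h2
  · rw [← Set.Iic_union_Ioc_eq_Iic h1, lintegral_union measurableSet_Ioc
      (Set.Iic_disjoint_Ioc le_rfl), P0, zero_add, (P1 t h1 h2.le).1,
      ratioCDF, if_neg (not_lt.2 h1), if_pos h2]
    congr 1
    have ht0 : (0:ℝ) < t := h0ab.trans_le h1
    field_simp
    ring
  rcases le_or_gt t (b / a) with h3 | h3
  · have e1 : Set.Iic t = Set.Iic (a / b) ∪ Set.Ioc (a / b) 1 ∪ Set.Ioc 1 t := by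
      rw [Set.Iic_union_Ioc_eq_Iic hab1.le, Set.Iic_union_Ioc_eq_Iic h2]
    rw [e1, lintegral_union measurableSet_Ioc
        ((Set.Iic_disjoint_Ioc hab1.le).union_left
          ((Set.Ioc_disjoint_Ioc_of_le le_rfl) : Disjoint (Set.Ioc (a/b) 1) (Set.Ioc 1 t))),
      lintegral_union measurableSet_Ioc (Set.Iic_disjoint_Ioc le_rfl),
      P0, zero_add, (P1 1 hab1.le le_rfl).1, (P2 t h2 h3).1,
      ← ENNReal.ofReal_add (P1 1 hab1.le le_rfl).2 (P2 t h2 h3).2,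
      ratioCDF, if_neg (not_lt.2 h1), if_neg (not_lt.2 h2), if_pos h3]
    congr 1
    have ht0 : (0:ℝ) < t := one_pos.trans_le h2
    field_simp
    ring
  · have e1 : Set.Iic t = Set.Iic (a / b) ∪ Set.Ioc (a / b) 1 ∪ Set.Ioc 1 (b / a)
        ∪ Set.Ioc (b / a) t := by
      rw [Set.Iic_union_Ioc_eq_Iic hab1.le, Set.Iic_union_Ioc_eq_Iic hba1.le,
        Set.Iic_union_Ioc_eq_Iic h3.le]
    have hz4 : (∫⁻ z in Set.Ioc (b / a) t, ENNReal.ofReal (ratioDensity a b z)) = 0 := by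
      rw [setLIntegral_congr_fun (g := fun _ => 0) measurableSet_Ioc
        (fun z hz => by
          rw [hhigh z hz.1, ENNReal.ofReal_zero]), lintegral_zero]
    rw [e1, lintegral_union measurableSet_Ioc
        (((Set.Iic_disjoint_Ioc (hab1.le.trans hba1.le)).union_left
            ((Set.Iic_disjoint_Ioc hba1.le).mono_left Set.Ioc_subset_Iic_self)).union_left
          ((Set.Ioc_disjoint_Ioc_of_le le_rfl) : Disjoint (Set.Ioc 1 (b/a)) (Set.Ioc (b/a) t))),
      lintegral_union measurableSet_Ioc
        ((Set.Iic_disjoint_Ioc hab1.le).union_left (Set.Ioc_disjoint_Ioc_of_le le_rfl)),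
      lintegral_union measurableSet_Ioc (Set.Iic_disjoint_Ioc le_rfl),
      P0, zero_add, (P1 1 hab1.le le_rfl).1, (P2 (b / a) hba1.le le_rfl).1, hz4, add_zero,
      ← ENNReal.ofReal_add (P1 1 hab1.le le_rfl).2 (P2 (b / a) hba1.le le_rfl).2,
      ratioCDF, if_neg (not_lt.2 h1), if_neg (not_lt.2 h2), if_neg (not_le.2 h3)]
    congr 1
    field_simp
    ring

/-- The slice integral for the CDF of the ratio. -/
lemma lintegral_slice (a b : ℝ) (ha : 0 < a) (hab : a < b) (t : ℝ) :
    (∫⁻ x in Set.Icc a b, ENNReal.ofReal (min b (t * x) - a))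
      = ENNReal.ofReal ((b - a) ^ 2 * ratioCDF a b t) := by
  have hb : 0 < b := ha.trans hab
  have hba : 0 < b - a := sub_pos.2 hab
  have h0ab : 0 < a / b := div_pos ha hb
  have hab1 : a / b < 1 := (div_lt_one hb).2 hab
  have hba1 : 1 < b / a := (one_lt_div ha).2 hab
  rw [← Measure.restrict_congr_set MeasureTheory.Ioc_ae_eq_Icc]
  rcases lt_or_ge t (a / b) with h1 | h1
  · have key : ∀ x ∈ Set.Ioc a b, ENNReal.ofReal (min b (t * x) - a) = 0 := by
      intro x hx
      have hx0 : 0 < x := ha.trans hx.1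
      have htx : t * x < a := by
        rcases le_or_gt t 0 with ht | ht
        · nlinarith
        · have h2 : t * b < a := (lt_div_iff₀ hb).1 h1
          nlinarith [mul_nonneg ht.le (sub_nonneg.2 hx.2)]
      exact ENNReal.ofReal_eq_zero.2 (by
        have := min_le_right b (t * x); linarith)
    rw [setLIntegral_congr_fun (g := fun _ => 0) measurableSet_Ioc
      key, lintegral_zero, ratioCDF, if_pos h1,
      mul_zero, ENNReal.ofReal_zero]
  rcases lt_or_ge t 1 with h2 | h2
  · have ht0 : 0 < t := h0ab.trans_le h1
    have hac : a ≤ a / t := by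
      rw [le_div_iff₀ ht0]; nlinarith
    have hcb : a / t ≤ b := by
      rw [div_le_iff₀ ht0]
      have := (div_le_iff₀ hb).1 h1
      nlinarith
    rw [← Set.Ioc_union_Ioc_eq_Ioc hac hcb,
      lintegral_union measurableSet_Ioc (Set.Ioc_disjoint_Ioc_of_le le_rfl)]
    have key : ∀ x ∈ Set.Ioc a (a / t), ENNReal.ofReal (min b (t * x) - a) = 0 := by
      intro x hx
      have htx : t * x ≤ a := by
        have := (le_div_iff₀ ht0).1 hx.2; nlinarith
      exact ENNReal.ofReal_eq_zero.2 (by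
        have := min_le_right b (t * x); linarith)
    have P := lint_Ioc_eq (fun x => min b (t * x) - a) (fun x => t * x - a)
      (fun x => t * x ^ 2 / 2 - a * x) (a / t) b hcb
      (fun x hx => by
        have hx0 : 0 < x := lt_trans (div_pos ha ht0) hx.1
        have : t * x ≤ b := by nlinarith [hx.2]
        show min b (t * x) - a = t * x - a
        rw [min_eq_right this])
      (((continuous_const.mul continuous_id).sub continuous_const).continuousOn)
      (fun x _ => by
        have h := (((hasDerivAt_pow 2 x).const_mul t).div_const 2).sub
          ((hasDerivAt_id x).const_mul a)
        refine h.congr_deriv ?_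
        push_cast; ring)
      (fun x hx => by
        have := (div_lt_iff₀ ht0).1 hx.1
        show 0 ≤ t * x - a
        nlinarith)
    rw [setLIntegral_congr_fun (g := fun _ => 0) measurableSet_Ioc
      key, lintegral_zero, zero_add, P.1,
      ratioCDF, if_neg (not_lt.2 h1), if_pos h2]
    congr 1
    field_simp
    ring
  rcases le_or_gt t (b / a) with h3 | h3
  · have ht0 : 0 < t := lt_of_lt_of_le one_pos h2
    have hac : a ≤ b / t := by
      rw [le_div_iff₀ ht0]
      have := (le_div_iff₀ ha).1 h3
      nlinarith
    have hcb : b / t ≤ b := div_le_self hb.le h2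
    rw [← Set.Ioc_union_Ioc_eq_Ioc hac hcb,
      lintegral_union measurableSet_Ioc (Set.Ioc_disjoint_Ioc_of_le le_rfl)]
    have P1 := lint_Ioc_eq (fun x => min b (t * x) - a) (fun x => t * x - a)
      (fun x => t * x ^ 2 / 2 - a * x) a (b / t) hac
      (fun x hx => by
        have : t * x ≤ b := by
          have := (lt_div_iff₀ ht0).1 hx.2; nlinarith
        show min b (t * x) - a = t * x - a
        rw [min_eq_right this])
      (((continuous_const.mul continuous_id).sub continuous_const).continuousOn)
      (fun x _ => by
        have h := (((hasDerivAt_pow 2 x).const_mul t).div_const 2).sub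
          ((hasDerivAt_id x).const_mul a)
        refine h.congr_deriv ?_
        push_cast; ring)
      (fun x hx => by
        show 0 ≤ t * x - a
        nlinarith [hx.1, mul_nonneg (sub_nonneg.2 h2) (ha.trans hx.1).le])
    have P2 := lint_Ioc_eq (fun x => min b (t * x) - a) (fun _ => b - a)
      (fun x => (b - a) * x) (b / t) b hcb
      (fun x hx => by
        have : b ≤ t * x := by
          have := (div_lt_iff₀ ht0).1 hx.1; nlinarith
        show min b (t * x) - a = b - a
        rw [min_eq_left this])
      continuousOn_const
      (fun x _ => by
        have h := (hasDerivAt_id x).const_mul (b - a)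
        refine h.congr_deriv ?_
        ring)
      (fun x _ => hba.le)
    rw [P1.1, P2.1, ← ENNReal.ofReal_add P1.2 P2.2,
      ratioCDF, if_neg (not_lt.2 h1), if_neg (not_lt.2 h2), if_pos h3]
    congr 1
    field_simp
    ring
  · have ht0 : 0 < t := lt_trans (div_pos hb ha) h3
    have P := lint_Ioc_eq (fun x => min b (t * x) - a) (fun _ => b - a)
      (fun x => (b - a) * x) a b hab.le
      (fun x hx => by
        have hba' : b < t * a := (div_lt_iff₀ ha).1 h3
        have : b ≤ t * x := by nlinarith [hx.1]
        show min b (t * x) - a = b - a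
        rw [min_eq_left this])
      continuousOn_const
      (fun x _ => by
        have h := (hasDerivAt_id x).const_mul (b - a)
        refine h.congr_deriv ?_
        ring)
      (fun x _ => hba.le)
    rw [P.1, ratioCDF, if_neg (not_lt.2 h1), if_neg (not_lt.2 h2), if_neg (not_le.2 h3)]
    congr 1
    ring

/-- If `X` and `Y` are independent random variables, each uniformly distributed
on `[a, b]` with `0 < a < b`, then `Z = Y/X` has density `ratioDensity a b`
with respect to Lebesgue measure on `ℝ`. -/
theorem map_ratio_uniform_eq_withDensity
    {Ω : Type*} [MeasurableSpace Ω] {μ : Measure Ω} [IsProbabilityMeasure μ]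
    (X Y : Ω → ℝ) (hX : Measurable X) (hY : Measurable Y)
    (hXY : IndepFun X Y μ)
    (a b : ℝ) (ha : 0 < a) (hab : a < b)
    (hXunif : Measure.map X μ =
      (ENNReal.ofReal (b - a))⁻¹ • volume.restrict (Set.Icc a b))
    (hYunif : Measure.map Y μ =
      (ENNReal.ofReal (b - a))⁻¹ • volume.restrict (Set.Icc a b)) :
    Measure.map (fun ω => Y ω / X ω) μ =
      volume.withDensity (fun z => ENNReal.ofReal (ratioDensity a b z)) := by
  have hb : 0 < b := ha.trans hab
  have hba : 0 < b - a := sub_pos.2 hab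
  set c : ENNReal := (ENNReal.ofReal (b - a))⁻¹ with hc
  set ν : Measure ℝ := c • volume.restrict (Set.Icc a b) with hν
  have hdiv : Measurable (fun p : ℝ × ℝ => p.2 / p.1) :=
    measurable_snd.div measurable_fst
  have hprod : μ.map (fun ω => (X ω, Y ω)) = ν.prod ν := by
    rw [(ProbabilityTheory.indepFun_iff_map_prod_eq_prod_map_map
      hX.aemeasurable hY.aemeasurable).mp hXY, hXunif, hYunif]
  have hmap : μ.map (fun ω => Y ω / X ω) = (ν.prod ν).map (fun p : ℝ × ℝ => p.2 / p.1) := by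
    rw [← hprod, Measure.map_map hdiv (hX.prodMk hY)]
    rfl
  haveI : IsProbabilityMeasure (μ.map (fun ω => Y ω / X ω)) :=
    Measure.isProbabilityMeasure_map (hY.div hX).aemeasurable
  have hcne : ENNReal.ofReal (b - a) ≠ 0 := ne_of_gt (ENNReal.ofReal_pos.2 hba)
  have hcnet : c ≠ ⊤ := by
    simp [hc, hcne]
  apply Measure.ext_of_Iic
  intro t
  rw [hmap, Measure.map_apply hdiv measurableSet_Iic,
    withDensity_apply _ measurableSet_Iic, lintegral_ratioDensity_Iic a b ha hab t]
  -- compute the product measure of the preimage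
  have hS : MeasurableSet ((fun p : ℝ × ℝ => p.2 / p.1) ⁻¹' Set.Iic t) :=
    hdiv measurableSet_Iic
  rw [Measure.prod_apply hS]
  have hslice : ∀ x ∈ Set.Icc a b,
      ν (Prod.mk x ⁻¹' ((fun p : ℝ × ℝ => p.2 / p.1) ⁻¹' Set.Iic t))
        = c * ENNReal.ofReal (min b (t * x) - a) := by
    intro x hx
    have hx0 : 0 < x := lt_of_lt_of_le ha hx.1
    have hset : Prod.mk x ⁻¹' ((fun p : ℝ × ℝ => p.2 / p.1) ⁻¹' Set.Iic t)
        = Set.Iic (t * x) := by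
      ext y
      simp [Set.mem_Iic, div_le_iff₀ hx0, mul_comm]
    rw [hset, hν, Measure.smul_apply, smul_eq_mul,
      Measure.restrict_apply measurableSet_Iic]
    congr 1
    have : Set.Iic (t * x) ∩ Set.Icc a b = Set.Icc a (min b (t * x)) := by
      ext y
      simp only [Set.mem_inter_iff, Set.mem_Iic, Set.mem_Icc, le_min_iff]
      constructor
      · rintro ⟨h1, h2, h3⟩; exact ⟨h2, h3, h1⟩
      · rintro ⟨h1, h2, h3⟩; exact ⟨h3, h1, h2⟩
    rw [this, Real.volume_Icc]
  calc (∫⁻ x, ν (Prod.mk x ⁻¹' ((fun p : ℝ × ℝ => p.2 / p.1) ⁻¹' Set.Iic t)) ∂ν)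
      = c * ∫⁻ x in Set.Icc a b,
          ν (Prod.mk x ⁻¹' ((fun p : ℝ × ℝ => p.2 / p.1) ⁻¹' Set.Iic t)) := by
        rw [hν, lintegral_smul_measure, smul_eq_mul]
    _ = c * ∫⁻ x in Set.Icc a b, c * ENNReal.ofReal (min b (t * x) - a) := by
        rw [setLIntegral_congr_fun measurableSet_Icc
          hslice]
    _ = c * (c * ∫⁻ x in Set.Icc a b, ENNReal.ofReal (min b (t * x) - a)) := by
        rw [lintegral_const_mul' c _ hcnet]
    _ = c * (c * ENNReal.ofReal ((b - a) ^ 2 * ratioCDF a b t)) := by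
        rw [lintegral_slice a b ha hab t]
    _ = (c * ENNReal.ofReal (b - a)) * ((c * ENNReal.ofReal (b - a))
          * ENNReal.ofReal (ratioCDF a b t)) := by
        rw [show ENNReal.ofReal ((b - a) ^ 2 * ratioCDF a b t)
            = ENNReal.ofReal (b - a) * (ENNReal.ofReal (b - a)
              * ENNReal.ofReal (ratioCDF a b t)) by
          rw [← ENNReal.ofReal_mul hba.le, ← ENNReal.ofReal_mul hba.le]
          congr 1
          ring]
        ring
    _ = ENNReal.ofReal (ratioCDF a b t) := by
        rw [hc, ENNReal.inv_mul_cancel hcne ENNReal.ofReal_ne_top, one_mul, one_mul]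
end

section
/- Let 0 < a < b be real numbers and let X and Y be independent random variables, each uniformly distributed on the interval [a, b]. Then the expected error-amplification factor of addition satisfies E[((X + Y)/Y)²] = 1 + (a + b)(ln b − ln a)/(b − a) + (a² + ab + b²)/(3ab). In particular this quantity is strictly greater than 1. -/
open MeasureTheory ProbabilityTheory

/-- If `X` and `Y` are independent random variables, each uniformly distributed
on `[a, b]` with `0 < a < b`, then the expected error-amplification factor of
addition satisfies
`E[((X + Y)/Y)²] = 1 + (a + b)(ln b − ln a)/(b − a) + (a² + ab + b²)/(3ab)`,
and this quantity is strictly greater than 1. -/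
theorem integral_sq_addition_amplification_uniform
    {Ω : Type*} [MeasurableSpace Ω] {μ : Measure Ω} [IsProbabilityMeasure μ]
    (X Y : Ω → ℝ) (hX : Measurable X) (hY : Measurable Y)
    (hXY : IndepFun X Y μ)
    (a b : ℝ) (ha : 0 < a) (hab : a < b)
    (hXunif : Measure.map X μ =
      (ENNReal.ofReal (b - a))⁻¹ • volume.restrict (Set.Icc a b))
    (hYunif : Measure.map Y μ =
      (ENNReal.ofReal (b - a))⁻¹ • volume.restrict (Set.Icc a b)) :
    (∫ ω, ((X ω + Y ω) / Y ω) ^ 2 ∂μ) =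
        1 + (a + b) * (Real.log b - Real.log a) / (b - a)
          + (a ^ 2 + a * b + b ^ 2) / (3 * (a * b)) ∧
      1 < (∫ ω, ((X ω + Y ω) / Y ω) ^ 2 ∂μ) := by
  have hb : 0 < b := ha.trans hab
  have hba : 0 < b - a := sub_pos.2 hab
  -- a.e. membership in Icc
  have haeIcc : ∀ (Z : Ω → ℝ), Measurable Z →
      Measure.map Z μ = (ENNReal.ofReal (b - a))⁻¹ • volume.restrict (Set.Icc a b) →
      ∀ᵐ ω ∂μ, Z ω ∈ Set.Icc a b := by
    intro Z hZ hZu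
    have h0 : μ (Z ⁻¹' (Set.Icc a b)ᶜ) = 0 := by
      rw [← Measure.map_apply hZ measurableSet_Icc.compl, hZu]
      simp [Measure.restrict_apply measurableSet_Icc.compl]
    rw [ae_iff]
    exact h0
  have hXae := haeIcc X hX hXunif
  have hYae := haeIcc Y hY hYunif
  -- integral of a function of one uniform variable
  have huint : ∀ (Z : Ω → ℝ), Measurable Z →
      Measure.map Z μ = (ENNReal.ofReal (b - a))⁻¹ • volume.restrict (Set.Icc a b) →
      ∀ (f : ℝ → ℝ), Measurable f →
      ∫ ω, f (Z ω) ∂μ = (b - a)⁻¹ * ∫ x in a..b, f x := by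
    intro Z hZ hZu f hf
    rw [← integral_map hZ.aemeasurable hf.aestronglyMeasurable, hZu,
      integral_smul_measure]
    rw [ENNReal.toReal_inv, ENNReal.toReal_ofReal hba.le, smul_eq_mul,
      MeasureTheory.integral_Icc_eq_integral_Ioc,
      ← intervalIntegral.integral_of_le hab.le]
  -- boundedness / integrability
  have hint : ∀ (f g : ℝ → ℝ), Measurable f → Measurable g →
      (C : ℝ) → (∀ x ∈ Set.Icc a b, ∀ y ∈ Set.Icc a b, |f x * g y| ≤ C) →
      Integrable (fun ω => f (X ω) * g (Y ω)) μ := by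
    intro f g hf hg C hC
    refine Integrable.mono' (integrable_const C)
      ((hf.comp hX).mul (hg.comp hY)).aestronglyMeasurable ?_
    filter_upwards [hXae, hYae] with ω hx hy
    rw [Real.norm_eq_abs]
    exact hC _ hx _ hy
  have hIsq : Integrable (fun ω => (X ω) ^ 2 * ((Y ω)⁻¹) ^ 2) μ := by
    refine hint _ _ (measurable_id.pow_const 2) (measurable_inv.pow_const 2)
      (b ^ 2 * (a⁻¹) ^ 2) ?_
    intro x hx y hy
    rw [abs_mul]
    have h1 : |x ^ 2| ≤ b ^ 2 := by
      rw [abs_pow]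
      exact pow_le_pow_left₀ (abs_nonneg x) (abs_le.2 ⟨by linarith [hx.1], hx.2⟩) 2
    have h2 : |(y⁻¹) ^ 2| ≤ (a⁻¹) ^ 2 := by
      rw [abs_pow]
      refine pow_le_pow_left₀ (abs_nonneg _) ?_ 2
      rw [abs_of_nonneg (inv_nonneg.2 (ha.le.trans hy.1))]
      exact inv_anti₀ ha hy.1
    exact mul_le_mul h1 h2 (abs_nonneg _) (by positivity)
  have hIlin : Integrable (fun ω => X ω * (Y ω)⁻¹) μ := by
    refine hint _ _ measurable_id measurable_inv (b * a⁻¹) ?_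
    intro x hx y hy
    rw [abs_mul]
    have h1 : |x| ≤ b := abs_le.2 ⟨by linarith [hx.1], hx.2⟩
    have h2 : |y⁻¹| ≤ a⁻¹ := by
      rw [abs_of_nonneg (inv_nonneg.2 (ha.le.trans hy.1))]
      exact inv_anti₀ ha hy.1
    exact mul_le_mul h1 h2 (abs_nonneg _) (by linarith [hb.le])
  -- pointwise rewrite
  have hcongr : ∫ ω, ((X ω + Y ω) / Y ω) ^ 2 ∂μ
      = ∫ ω, ((X ω) ^ 2 * ((Y ω)⁻¹) ^ 2 + (2 * (X ω * (Y ω)⁻¹) + 1)) ∂μ := by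
    refine integral_congr_ae ?_
    filter_upwards [hYae] with ω hy
    have hy0 : Y ω ≠ 0 := (ha.trans_le hy.1).ne'
    field_simp
    ring
  -- split the integral
  have hI2 : Integrable (fun ω => 2 * (X ω * (Y ω)⁻¹) + 1) μ :=
    ((hIlin.const_mul 2).add (integrable_const 1))
  rw [hcongr, integral_add hIsq hI2, integral_add (hIlin.const_mul 2) (integrable_const 1),
    integral_const_mul, integral_const, probReal_univ]
  -- independence of composed functions
  have hsq : (∫ ω, (X ω) ^ 2 * ((Y ω)⁻¹) ^ 2 ∂μ)
      = (∫ ω, (X ω) ^ 2 ∂μ) * ∫ ω, ((Y ω)⁻¹) ^ 2 ∂μ := by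
    exact (hXY.comp (measurable_id.pow_const 2) (measurable_inv.pow_const 2)).integral_mul_eq_mul_integral
      ((hX.pow_const 2).aestronglyMeasurable)
      (((hY.inv).pow_const 2).aestronglyMeasurable)
  have hlin : (∫ ω, X ω * (Y ω)⁻¹ ∂μ)
      = (∫ ω, X ω ∂μ) * ∫ ω, (Y ω)⁻¹ ∂μ := by
    exact (hXY.comp measurable_id measurable_inv).integral_mul_eq_mul_integral
      hX.aestronglyMeasurable (hY.inv).aestronglyMeasurable
  rw [hsq, hlin]
  -- compute the four integrals
  have h0ab : (0:ℝ) ∉ Set.uIcc a b := by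
    rw [Set.uIcc_of_le hab.le]
    intro h
    exact absurd h.1 (not_le.2 ha)
  have hEX : ∫ ω, X ω ∂μ = (a + b) / 2 := by
    rw [huint X hX hXunif (fun x => x) measurable_id, integral_id]
    field_simp
    ring
  have hEX2 : ∫ ω, (X ω) ^ 2 ∂μ = (a ^ 2 + a * b + b ^ 2) / 3 := by
    rw [huint X hX hXunif (fun x => x ^ 2) (measurable_id.pow_const 2), integral_pow]
    have : b ^ 3 - a ^ 3 = (b - a) * (a ^ 2 + a * b + b ^ 2) := by ring
    field_simp
    ring
  have hEY1 : ∫ ω, (Y ω)⁻¹ ∂μ = (Real.log b - Real.log a) / (b - a) := by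
    rw [huint Y hY hYunif (fun y => y⁻¹) measurable_inv, integral_inv h0ab,
      Real.log_div hb.ne' ha.ne']
    ring
  have hEY2 : ∫ ω, ((Y ω)⁻¹) ^ 2 ∂μ = (a * b)⁻¹ := by
    rw [huint Y hY hYunif (fun y => y⁻¹ ^ 2) (measurable_inv.pow_const 2)]
    have : ∫ x in a..b, (x⁻¹) ^ 2 = ∫ x in a..b, x ^ (-2 : ℤ) := by
      apply intervalIntegral.integral_congr
      intro x hx
      show x⁻¹ ^ 2 = x ^ (-2 : ℤ)
      rw [zpow_neg, zpow_ofNat, inv_pow]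
    rw [this, integral_zpow (Or.inr ⟨by norm_num, h0ab⟩)]
    norm_num
    field_simp
    ring
  rw [hEX, hEX2, hEY1, hEY2]
  have hlog : 0 < Real.log b - Real.log a := sub_pos.2 (Real.log_lt_log ha hab)
  constructor
  · field_simp
    ring
  · have h1 : 0 < (a + b) / 2 * ((Real.log b - Real.log a) / (b - a)) := by positivity
    have h2 : 0 < (a ^ 2 + a * b + b ^ 2) / 3 * (a * b)⁻¹ := by positivity
    simp only [measure_univ, ENNReal.toReal_one, smul_eq_mul, one_mul, mul_one]
    linarith
end

section
/- Let 0 < a < b be real numbers and let X and Y be independent random variables, each uniformly distributed on the interval [a, b]. Then the expected error-amplification factor of subtraction satisfies E[((Y − X)/Y)²] = 1 − (a + b)(ln b − ln a)/(b − a) + (a² + ab + b²)/(3ab). -/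
open MeasureTheory ProbabilityTheory

section Aux

variable {a b : ℝ}

lemma unif_integral (ha : 0 < a) (hab : a < b) (f : ℝ → ℝ) :
    ∫ x, f x ∂((ENNReal.ofReal (b - a))⁻¹ • volume.restrict (Set.Icc a b))
      = (b - a)⁻¹ * ∫ x in a..b, f x := by
  rw [integral_smul_measure, ENNReal.toReal_inv, ENNReal.toReal_ofReal (by linarith)]
  rw [intervalIntegral.integral_of_le hab.le, ← integral_Icc_eq_integral_Ioc]
  simp [smul_eq_mul]

lemma unif_integrable (ha : 0 < a) (hab : a < b) (f : ℝ → ℝ)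
    (hf : ContinuousOn f (Set.Icc a b)) :
    Integrable f ((ENNReal.ofReal (b - a))⁻¹ • volume.restrict (Set.Icc a b)) := by
  refine Integrable.smul_measure (hf.integrableOn_compact isCompact_Icc) ?_
  simp [sub_pos, hab]

lemma unif_prob (ha : 0 < a) (hab : a < b) :
    IsProbabilityMeasure ((ENNReal.ofReal (b - a))⁻¹ • volume.restrict (Set.Icc a b)) := by
  constructor
  rw [Measure.smul_apply, Measure.restrict_apply MeasurableSet.univ, Set.univ_inter,
    Real.volume_Icc, smul_eq_mul, ENNReal.inv_mul_cancel]
  · simp [sub_pos, hab]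
  · exact ENNReal.ofReal_ne_top

end Aux

/-- If `X` and `Y` are independent random variables, each uniformly distributed
on `[a, b]` with `0 < a < b`, then the expected error-amplification factor of
subtraction satisfies
`E[((Y − X)/Y)²] = 1 − (a + b)(ln b − ln a)/(b − a) + (a² + ab + b²)/(3ab)`. -/
theorem integral_sq_subtraction_amplification_uniform
    {Ω : Type*} [MeasurableSpace Ω] {μ : Measure Ω} [IsProbabilityMeasure μ]
    (X Y : Ω → ℝ) (hX : Measurable X) (hY : Measurable Y)
    (hXY : IndepFun X Y μ)
    (a b : ℝ) (ha : 0 < a) (hab : a < b)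
    (hXunif : Measure.map X μ =
      (ENNReal.ofReal (b - a))⁻¹ • volume.restrict (Set.Icc a b))
    (hYunif : Measure.map Y μ =
      (ENNReal.ofReal (b - a))⁻¹ • volume.restrict (Set.Icc a b)) :
    (∫ ω, ((Y ω - X ω) / Y ω) ^ 2 ∂μ) =
      1 - (a + b) * (Real.log b - Real.log a) / (b - a)
        + (a ^ 2 + a * b + b ^ 2) / (3 * (a * b)) := by
  set ν : Measure ℝ := (ENNReal.ofReal (b - a))⁻¹ • volume.restrict (Set.Icc a b) with hν
  have hb : 0 < b := ha.trans hab
  have hba : 0 < b - a := sub_pos.2 hab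
  haveI : IsProbabilityMeasure ν := unif_prob ha hab
  -- joint law is product
  have hmap : Measure.map (fun ω => (X ω, Y ω)) μ = ν.prod ν := by
    rw [(indepFun_iff_map_prod_eq_prod_map_map hX.aemeasurable hY.aemeasurable).1 hXY,
      hXunif, hYunif]
  -- measurability of the integrand
  have hmeas : Measurable fun p : ℝ × ℝ => ((p.2 - p.1) / p.2) ^ 2 :=
    ((measurable_snd.sub measurable_fst).div measurable_snd).pow_const 2
  have step1 : (∫ ω, ((Y ω - X ω) / Y ω) ^ 2 ∂μ)
      = ∫ p : ℝ × ℝ, ((p.2 - p.1) / p.2) ^ 2 ∂(ν.prod ν) := by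
    rw [← hmap, integral_map (hX.prodMk hY).aemeasurable hmeas.aestronglyMeasurable]
  -- a.e. rewrite: second coordinate lies in Icc a b
  have hae : ∀ᵐ p : ℝ × ℝ ∂(ν.prod ν),
      ((p.2 - p.1) / p.2) ^ 2 = 1 - 2 * (p.1 * (1 / p.2)) + p.1 ^ 2 * (1 / p.2 ^ 2) := by
    have hset : (ν.prod ν) {p : ℝ × ℝ | p.2 ∉ Set.Icc a b} = 0 := by
      have : {p : ℝ × ℝ | p.2 ∉ Set.Icc a b} = Set.univ ×ˢ (Set.Icc a b)ᶜ := by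
        ext p; simp
      rw [this, Measure.prod_prod]
      have : ν (Set.Icc a b)ᶜ = 0 := by
        rw [hν, Measure.smul_apply, Measure.restrict_apply measurableSet_Icc.compl]
        simp
      rw [this, mul_zero]
    refine (measure_mono_null ?_ hset : _)
    intro p hp
    simp only [Set.mem_setOf_eq, Set.mem_compl_iff] at hp ⊢
    intro hmem
    apply hp
    have hy : p.2 ≠ 0 := by
      intro h0; rw [h0] at hmem; exact absurd hmem.1 (not_le.2 ha)
    field_simp
    ring
  rw [step1, integral_congr_ae hae]
  -- integrability of pieces
  have hint1 : Integrable (fun p : ℝ × ℝ => p.1 * (1 / p.2)) (ν.prod ν) :=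
    Integrable.mul_prod (unif_integrable ha hab _ continuousOn_id)
      (unif_integrable ha hab _ (ContinuousOn.div continuousOn_const continuousOn_id
        (fun x hx => ne_of_gt (lt_of_lt_of_le ha hx.1))))
  have hint2 : Integrable (fun p : ℝ × ℝ => p.1 ^ 2 * (1 / p.2 ^ 2)) (ν.prod ν) :=
    Integrable.mul_prod (unif_integrable ha hab _ (continuousOn_id.pow 2))
      (unif_integrable ha hab _ (ContinuousOn.div continuousOn_const (continuousOn_id.pow 2)
        (fun x hx => pow_ne_zero 2 (ne_of_gt (lt_of_lt_of_le ha hx.1)))))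
  have hconst : Integrable (fun _ : ℝ × ℝ => (1 : ℝ)) (ν.prod ν) := integrable_const 1
  have e1 : ∫ p : ℝ × ℝ, (1 - 2 * (p.1 * (1 / p.2)) + p.1 ^ 2 * (1 / p.2 ^ 2)) ∂(ν.prod ν)
      = (∫ p : ℝ × ℝ, (1 - 2 * (p.1 * (1 / p.2))) ∂(ν.prod ν))
        + ∫ p : ℝ × ℝ, p.1 ^ 2 * (1 / p.2 ^ 2) ∂(ν.prod ν) :=
    integral_add (hconst.sub (hint1.const_mul 2)) hint2
  have e2 : ∫ p : ℝ × ℝ, (1 - 2 * (p.1 * (1 / p.2))) ∂(ν.prod ν)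
      = (∫ _ : ℝ × ℝ, (1:ℝ) ∂(ν.prod ν))
        - ∫ p : ℝ × ℝ, 2 * (p.1 * (1 / p.2)) ∂(ν.prod ν) :=
    integral_sub hconst (hint1.const_mul 2)
  rw [e1, e2, integral_const, integral_const_mul,
    integral_prod_mul (fun x : ℝ => x) (fun y : ℝ => 1 / y),
    integral_prod_mul (fun x : ℝ => x ^ 2) (fun y : ℝ => 1 / y ^ 2)]
  -- compute one-dimensional integrals
  have h0 : (0:ℝ) ∉ Set.uIcc a b := by
    rw [Set.uIcc_of_le hab.le]
    intro h; exact absurd h.1 (not_le.2 ha)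
  have hx1 : ∫ x, x ∂ν = (b - a)⁻¹ * ((b ^ 2 - a ^ 2) / 2) := by
    rw [hν, unif_integral ha hab]
    norm_num [integral_id]
  have hx2 : ∫ x, x ^ 2 ∂ν = (b - a)⁻¹ * ((b ^ 3 - a ^ 3) / 3) := by
    rw [hν, unif_integral ha hab]
    norm_num [integral_pow]
  have hy1 : ∫ y, 1 / y ∂ν = (b - a)⁻¹ * (Real.log b - Real.log a) := by
    rw [hν, unif_integral ha hab, integral_one_div h0, Real.log_div hb.ne' ha.ne']
  have hy2 : ∫ y, 1 / y ^ 2 ∂ν = (b - a)⁻¹ * (1 / a - 1 / b) := by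
    rw [hν, unif_integral ha hab]
    have : ∀ y ∈ Set.uIcc a b, 1 / y ^ 2 = y ^ (-2 : ℤ) := by
      intro y hy
      rw [zpow_neg, one_div]
      norm_cast
    rw [intervalIntegral.integral_congr this,
      integral_zpow (Or.inr ⟨by norm_num, h0⟩)]
    norm_num
    left; ring
  rw [hx1, hx2, hy1, hy2]
  simp only [measure_univ, probReal_univ, ENNReal.toReal_one, smul_eq_mul, one_mul]
  have h1 : (b - a) ≠ 0 := hba.ne'
  field_simp
  ring
end
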